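/- Let X ⊂ ℙ³ be a smooth quartic surface and m ≥ 1. Then H¹(X, Ω¹_X(m)) ≅ ker( H²(X, O_X(m−4)) → H²(X, Ω¹_{ℙ³}|_X(m)) ), and H²(X, Ω¹_{ℙ³}|_X(m)) = 0 for m ≥ 2 while H²(X, Ω¹_{ℙ³}|_X(1)) ≅ H⁰(X, O_X)^⊕4 ≅ ℂ⁴. -/
import Mathlib


open Function Module

/-- Let `X ⊂ ℙ³` be a smooth quartic (K3) surface over `ℂ` and `m ≥ 1`. Then
`H¹(X, Ω¹_X(m)) ≅ ker(H²(X, O_X(m−4)) → H²(X, Ω¹_{ℙ³}|_X(m)))`, and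
`H²(X, Ω¹_{ℙ³}|_X(m)) = 0` for `m ≥ 2`, while `H²(X, Ω¹_{ℙ³}|_X(1)) ≅ H⁰(X, O_X)^⊕4 ≅ ℂ⁴`.
We formalize the cohomology groups as `ℂ`-vector spaces: `Hi k = H^i(X, O_X(k))`,
`HPi m = H^i(X, Ω¹_{ℙ³}|_X(m))`, `HΩ m = H¹(X, Ω¹_X(m))`, related by the long exact
sequences of the restricted Euler sequence `0 → Ω¹_{ℙ³}|_X(m) → O_X(m−1)^⊕4 → O_X(m) → 0`
and of the conormal sequence `0 → O_X(m−4) → Ω¹_{ℙ³}|_X(m) → Ω¹_X(m) → 0`, together with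
the dimensions `h⁰(O_X(k)) = C(k+3,3) − C(k−1,3)`, the vanishing `H¹(O_X(k)) = 0`, Serre
duality `H²(O_X(k)) ≅ H⁰(O_X(−k))^∨` (`ω_X = O_X`), and projective normality. -/
theorem stmt10
    (H0 H1 H2 : ℤ → Type)
    [∀ k, AddCommGroup (H0 k)] [∀ k, Module ℂ (H0 k)] [∀ k, FiniteDimensional ℂ (H0 k)]
    [∀ k, AddCommGroup (H1 k)] [∀ k, Module ℂ (H1 k)] [∀ k, FiniteDimensional ℂ (H1 k)]
    [∀ k, AddCommGroup (H2 k)] [∀ k, Module ℂ (H2 k)] [∀ k, FiniteDimensional ℂ (H2 k)]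
    (HP1 HP2 : ℤ → Type)
    [∀ m, AddCommGroup (HP1 m)] [∀ m, Module ℂ (HP1 m)]
    [∀ m, AddCommGroup (HP2 m)] [∀ m, Module ℂ (HP2 m)]
    (HΩ : ℤ → Type) [∀ m, AddCommGroup (HΩ m)] [∀ m, Module ℂ (HΩ m)]
    -- long exact sequence of the restricted Euler sequence
    (e : ∀ m : ℤ, (Fin 4 → H0 (m - 1)) →ₗ[ℂ] H0 m)
    (δ₀ : ∀ m : ℤ, H0 m →ₗ[ℂ] HP1 m)
    (u₁ : ∀ m : ℤ, HP1 m →ₗ[ℂ] (Fin 4 → H1 (m - 1)))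
    (v₁ : ∀ m : ℤ, (Fin 4 → H1 (m - 1)) →ₗ[ℂ] H1 m)
    (δ₁ : ∀ m : ℤ, H1 m →ₗ[ℂ] HP2 m)
    (u₂ : ∀ m : ℤ, HP2 m →ₗ[ℂ] (Fin 4 → H2 (m - 1)))
    (v₂ : ∀ m : ℤ, (Fin 4 → H2 (m - 1)) →ₗ[ℂ] H2 m)
    (hE₁ : ∀ m, Exact (e m) (δ₀ m)) (hE₂ : ∀ m, Exact (δ₀ m) (u₁ m))
    (hE₃ : ∀ m, Exact (u₁ m) (v₁ m)) (hE₄ : ∀ m, Exact (v₁ m) (δ₁ m))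
    (hE₅ : ∀ m, Exact (δ₁ m) (u₂ m)) (hE₆ : ∀ m, Exact (u₂ m) (v₂ m))
    -- long exact sequence of the conormal sequence
    (c : ∀ m : ℤ, HP1 m →ₗ[ℂ] HΩ m)
    (δc : ∀ m : ℤ, HΩ m →ₗ[ℂ] H2 (m - 4))
    (φ : ∀ m : ℤ, H2 (m - 4) →ₗ[ℂ] HP2 m)
    (hC₁ : ∀ m, Exact (c m) (δc m)) (hC₂ : ∀ m, Exact (δc m) (φ m))
    -- cohomology of line bundles on the quartic surface
    (hH0 : ∀ k : ℤ, finrank ℂ (H0 k) =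
      if k < 0 then 0 else Nat.choose (k + 3).toNat 3 - Nat.choose (k - 1).toNat 3)
    (hH1 : ∀ k : ℤ, Subsingleton (H1 k))
    (hSerre : ∀ k : ℤ, Nonempty (H2 k ≃ₗ[ℂ] Module.Dual ℂ (H0 (-k))))
    -- projective normality of the quartic
    (hpn : ∀ m : ℤ, 1 ≤ m → Surjective (e m)) :
    ∀ m : ℤ, 1 ≤ m →
      (Nonempty (HΩ m ≃ₗ[ℂ] LinearMap.ker (φ m)) ∧
        (2 ≤ m → Subsingleton (HP2 m)) ∧
        (m = 1 → Nonempty (HP2 m ≃ₗ[ℂ] (Fin 4 → H0 0)) ∧ finrank ℂ (HP2 m) = 4)) := by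
  classical
  -- negative twists have no sections
  have hH0neg : ∀ k : ℤ, k < 0 → Subsingleton (H0 k) := by
    intro k hk
    have h := hH0 k
    rw [if_pos hk] at h
    exact finrank_zero_iff.mp h
  -- H² vanishing for positive twists (Serre duality)
  have hH2pos : ∀ k : ℤ, 1 ≤ k → Subsingleton (H2 k) := by
    intro k hk
    obtain ⟨f⟩ := hSerre k
    have h1 : Subsingleton (H0 (-k)) := hH0neg _ (by omega)
    have h2 : Subsingleton (Module.Dual ℂ (H0 (-k))) :=
      ⟨fun a b => LinearMap.ext fun x => by rw [Subsingleton.elim x 0, map_zero, map_zero]⟩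
    exact f.toEquiv.subsingleton
  -- HP1 vanishes for m ≥ 1
  have hHP1 : ∀ m : ℤ, 1 ≤ m → Subsingleton (HP1 m) := by
    intro m hm
    have hδ0 : δ₀ m = 0 := by
      rw [← LinearMap.ker_eq_top, LinearMap.exact_iff.mp (hE₁ m),
        LinearMap.range_eq_top.mpr (hpn m hm)]
    refine subsingleton_of_forall_eq 0 fun x => ?_
    have hx : x ∈ LinearMap.ker (u₁ m) := by
      have : Subsingleton (Fin 4 → H1 (m - 1)) := by
        haveI := hH1 (m - 1); infer_instance
      exact Subsingleton.elim _ _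
    rw [LinearMap.exact_iff.mp (hE₂ m)] at hx
    obtain ⟨y, hy⟩ := hx
    rw [← hy, hδ0]; rfl
  intro m hm
  refine ⟨?_, ?_, ?_⟩
  · -- HΩ m ≃ ker (φ m)
    have hinj : Injective (δc m) := by
      rw [← LinearMap.ker_eq_bot]
      rw [LinearMap.exact_iff.mp (hC₁ m)]
      haveI := hHP1 m hm
      rw [Submodule.eq_bot_iff]
      rintro x ⟨y, rfl⟩
      rw [Subsingleton.elim y 0, map_zero]
    exact ⟨(LinearEquiv.ofInjective (δc m) hinj).trans
      (LinearEquiv.ofEq _ _ (LinearMap.exact_iff.mp (hC₂ m)).symm)⟩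
  · -- HP2 m = 0 for m ≥ 2
    intro hm2
    have hδ1 : ∀ x : HP2 m, u₂ m x = 0 → x = 0 := by
      intro x hx
      have : x ∈ LinearMap.range (δ₁ m) := by
        rw [← LinearMap.exact_iff.mp (hE₅ m)]; exact hx
      obtain ⟨y, rfl⟩ := this
      haveI := hH1 m
      rw [Subsingleton.elim y 0, map_zero]
    haveI : Subsingleton (Fin 4 → H2 (m - 1)) := by
      haveI := hH2pos (m - 1) (by omega); infer_instance
    refine subsingleton_of_forall_eq 0 fun x => ?_
    exact hδ1 x (Subsingleton.elim _ _)
  · -- m = 1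
    rintro rfl
    have hu₂inj : Injective (u₂ 1) := by
      rw [← LinearMap.ker_eq_bot, LinearMap.exact_iff.mp (hE₅ 1), Submodule.eq_bot_iff]
      rintro x ⟨y, rfl⟩
      haveI := hH1 1
      rw [Subsingleton.elim y 0, map_zero]
    have hu₂surj : Surjective (u₂ 1) := by
      rw [← LinearMap.range_eq_top, ← LinearMap.exact_iff.mp (hE₆ 1),
        LinearMap.ker_eq_top]
      haveI := hH2pos 1 le_rfl
      exact LinearMap.ext fun x => Subsingleton.elim _ _
    have eqv1 : HP2 1 ≃ₗ[ℂ] (Fin 4 → H2 (1 - 1)) :=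
      LinearEquiv.ofBijective (u₂ 1) ⟨hu₂inj, hu₂surj⟩
    -- H2 0 ≃ H0 0 since both have finrank 1
    have hfr0 : finrank ℂ (H0 0) = 1 := by
      have h := hH0 0
      norm_num at h
      simpa using h
    have hne : Nonempty (HP2 1 ≃ₗ[ℂ] (Fin 4 → H0 0)) := by
      obtain ⟨f⟩ := hSerre (1 - 1)
      have h11 : (1 : ℤ) - 1 = 0 := by norm_num
      rw [h11] at f
      have eqvH2 : H2 (1 - 1) ≃ₗ[ℂ] H0 0 := by
        refine f.trans (LinearEquiv.ofFinrankEq _ _ ?_)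
        rw [Subspace.dual_finrank_eq, neg_zero]
      exact ⟨eqv1.trans (LinearEquiv.piCongrRight fun _ => eqvH2)⟩
    refine ⟨hne, ?_⟩
    obtain ⟨eqv⟩ := hne
    rw [eqv.finrank_eq, Module.finrank_pi_fintype]
    simp [hfr0]
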